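/- arXiv:2306.13014 — 2 statements merged into one kernel-verified Lean document; each statement's English description precedes it below -/
import Mathlib

section
/- Let Δ : [0,1]² → ℝ be the kernel that is constant on each of the 9 squares [(i-1)/3, i/3) × [(j-1)/3, j/3), taking the values given by the symmetric matrix [[2,-1,-1],[-1,1,0],[-1,0,1]]. Then Δ is balanced (∫₀¹ Δ(x,y) dy = 0 for all x) and the triangle density t(K₃,Δ) = 28/27. -/
open MeasureTheory

/-- The 3×3 matrix of block values. -/
def stepMatrix : Fin 3 → Fin 3 → ℝ :=
  ![![2, -1, -1], ![-1, 1, 0], ![-1, 0, 1]]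

/-- Which third of `[0,1]` a point lies in. -/
noncomputable def blockIdx (x : ℝ) : Fin 3 :=
  if x < 1/3 then 0 else if x < 2/3 then 1 else 2

/-- The step kernel given by `stepMatrix` on the nine `1/3 × 1/3` squares. -/
noncomputable def stepKernel (x y : ℝ) : ℝ := stepMatrix (blockIdx x) (blockIdx y)

/-- The triangle density `t(K₃,Δ) = ∫∫∫ Δ(x,y)Δ(y,z)Δ(x,z)`. -/
noncomputable def triangleDensity (Δ : ℝ → ℝ → ℝ) : ℝ :=
  ∫ x in Set.Icc (0:ℝ) 1, ∫ y in Set.Icc (0:ℝ) 1, ∫ z in Set.Icc (0:ℝ) 1,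
    Δ x y * Δ y z * Δ x z

/-! `blockIdx` pushes Lebesgue measure on `[0,1]` forward to the uniform measure on `Fin 3`, so
every integral of a function of `blockIdx y` is an average over the three blocks. Hence
`∫ Δ(x,y) dy` is a row sum of the matrix divided by `3`, and `t(K₃,Δ) = tr(M³)/27`. -/

open Set

lemma measurable_blockIdx : Measurable blockIdx :=
  Measurable.ite measurableSet_Iio measurable_const
    (Measurable.ite measurableSet_Iio measurable_const measurable_const)

lemma blockIdx_preimage_inter_Icc (i : Fin 3) :
    blockIdx ⁻¹' {i} ∩ Icc 0 1 = ![Ico 0 (1/3), Ico (1/3) (2/3), Icc (2/3) 1] i := by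
  ext x
  fin_cases i <;> simp [blockIdx] <;> grind

lemma volume_real_blockIdx_preimage_inter_Icc (i : Fin 3) :
    volume.real (blockIdx ⁻¹' {i} ∩ Icc 0 1) = 3⁻¹ := by
  rw [blockIdx_preimage_inter_Icc]
  fin_cases i <;> norm_num [measureReal_def]

lemma integral_Icc_comp_blockIdx {E : Type*} [NormedAddCommGroup E] [NormedSpace ℝ E]
    [CompleteSpace E] (f : Fin 3 → E) :
    ∫ y in Icc (0:ℝ) 1, f (blockIdx y) = (3:ℝ)⁻¹ • ∑ i, f i := by
  rw [← integral_map measurable_blockIdx.aemeasurable (.of_discrete),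
    integral_fintype .of_finite, Finset.smul_sum]
  congr! 1 with i
  rw [map_measureReal_apply measurable_blockIdx (measurableSet_singleton i),
    measureReal_restrict_apply (measurable_blockIdx (measurableSet_singleton i)),
    volume_real_blockIdx_preimage_inter_Icc]

lemma triangleDensity_comp_blockIdx (M : Fin 3 → Fin 3 → ℝ) :
    triangleDensity (fun x y => M (blockIdx x) (blockIdx y)) =
      (∑ i, ∑ j, ∑ k, M i j * M j k * M i k) / 27 := by
  have integral_z (i j : Fin 3) :
      ∫ z in Icc (0:ℝ) 1, M i j * M j (blockIdx z) * M i (blockIdx z) =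
        3⁻¹ * ∑ k, M i j * M j k * M i k :=
    integral_Icc_comp_blockIdx fun k => M i j * M j k * M i k
  have integral_y (i : Fin 3) :
      ∫ y in Icc (0:ℝ) 1, 3⁻¹ * ∑ k, M i (blockIdx y) * M (blockIdx y) k * M i k =
        3⁻¹ * ∑ j, 3⁻¹ * ∑ k, M i j * M j k * M i k :=
    integral_Icc_comp_blockIdx fun j => 3⁻¹ * ∑ k, M i j * M j k * M i k
  rw [triangleDensity]
  simp only [integral_z, integral_y]
  rw [integral_Icc_comp_blockIdx fun i => 3⁻¹ * ∑ j, 3⁻¹ * ∑ k, M i j * M j k * M i k]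
  simp only [smul_eq_mul, Finset.mul_sum, Finset.sum_div]
  ring_nf

lemma stepMatrix_row_sum (i : Fin 3) : ∑ j, stepMatrix i j = 0 := by
  fin_cases i <;> norm_num [stepMatrix, Fin.sum_univ_three, Matrix.cons_val_two]

lemma stepMatrix_triangle_sum :
    ∑ i, ∑ j, ∑ k, stepMatrix i j * stepMatrix j k * stepMatrix i k = 28 := by
  norm_num [stepMatrix, Fin.sum_univ_three, Matrix.cons_val_two]

/-- the step kernel is balanced and its triangle density is `28/27`. -/
theorem stmt4 :
    (∀ x ∈ Set.Icc (0:ℝ) 1, (∫ y in Set.Icc (0:ℝ) 1, stepKernel x y) = 0) ∧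
    triangleDensity stepKernel = 28/27 := by
  refine ⟨fun x _ => ?_, ?_⟩
  · simp only [stepKernel, integral_Icc_comp_blockIdx, stepMatrix_row_sum, smul_zero]
  · rw [← stepMatrix_triangle_sum]
    exact triangleDensity_comp_blockIdx stepMatrix
end

section
/- Let p be an odd prime, and let G be a graph on ℓ vertices with minimum degree at least 2 that is not a clique. For any signing σ ∈ {±1}^{E(G)}, the symmetric ℓ×ℓ matrix M_G^σ = Σ_{e∈E(G)} σ_e E_e over 𝔽_p has rank at least 2, where E_e is the matrix with entries 1 in positions (e₁,e₁),(e₁,e₂),(e₂,e₁),(e₂,e₂) and 0 elsewhere. -/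
/-!
If `u` and `w` are non-adjacent and `v ~ u`, `t ~ w`, then the minor of `M_G^σ` on rows `u, t`
and columns `v, w` is `[[σ_uv, 0], [*, σ_tw]]`, whose determinant `σ_uv σ_tw = ±1` is nonzero.
-/

open scoped Classical

/-- The matrix `M_G^σ = Σ_{e ∈ E(G)} σ_e E_e` over `𝔽_p`, where `E_e` has ones in the
four positions indexed by the endpoints of `e` and zeros elsewhere. -/
noncomputable def signedEdgeMatrix (p : ℕ) {ℓ : ℕ} (G : SimpleGraph (Fin ℓ))
    (σ : Sym2 (Fin ℓ) → ZMod p) : Matrix (Fin ℓ) (Fin ℓ) (ZMod p) :=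
  Matrix.of fun i j =>
    ∑ e ∈ G.edgeFinset, σ e * (if i ∈ e ∧ j ∈ e then 1 else 0)

theorem Matrix.le_rank_of_det_submatrix_ne_zero {m n R : Type*} [Fintype n] [CommRing R]
    [IsDomain R] {k : ℕ} (A : Matrix m n R) (r : Fin k → m) (c : Fin k → n)
    (h : (A.submatrix r c).det ≠ 0) : k ≤ A.rank := by
  simpa using (Matrix.rank_of_det_ne_zero h).symm.le.trans (A.rank_submatrix_le r c)

section signedEdgeMatrix

variable (p : ℕ) {ℓ : ℕ} (G : SimpleGraph (Fin ℓ)) (σ : Sym2 (Fin ℓ) → ZMod p)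

theorem signedEdgeMatrix_apply_of_adj {i j : Fin ℓ} (h : G.Adj i j) :
    signedEdgeMatrix p G σ i j = σ s(i, j) := by
  rw [signedEdgeMatrix, Matrix.of_apply, Finset.sum_eq_single s(i, j)]
  · simp
  · intro e _ he
    simp [(Sym2.mem_and_mem_iff h.ne).not.mpr he]
  · simp [h]

theorem signedEdgeMatrix_apply_of_not_adj {i j : Fin ℓ} (hne : i ≠ j) (h : ¬G.Adj i j) :
    signedEdgeMatrix p G σ i j = 0 := by
  rw [signedEdgeMatrix, Matrix.of_apply]
  refine Finset.sum_eq_zero fun e he => ?_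
  have hij : ¬(i ∈ e ∧ j ∈ e) := fun hmem => by
    rw [(Sym2.mem_and_mem_iff hne).mp hmem, SimpleGraph.mem_edgeFinset] at he
    exact h he
  simp [hij]

end signedEdgeMatrix

theorem stmt15_general (p : ℕ) [Fact p.Prime]
    (ℓ : ℕ) (G : SimpleGraph (Fin ℓ))
    (hdeg : ∀ v : Fin ℓ, 2 ≤ G.degree v) (hnclique : G ≠ ⊤)
    (σ : Sym2 (Fin ℓ) → ZMod p)
    (hσ : ∀ e ∈ G.edgeFinset, σ e = 1 ∨ σ e = -1) :
    2 ≤ (signedEdgeMatrix p G σ).rank := by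
  have hσ_ne_zero {a b : Fin ℓ} (hab : G.Adj a b) : σ s(a, b) ≠ 0 := by
    rcases hσ s(a, b) (G.mem_edgeFinset.mpr hab) with h | h <;> simp [h]
  have exists_adj (a : Fin ℓ) : ∃ b, G.Adj a b :=
    (G.degree_pos_iff_exists_adj a).mp (by linarith [hdeg a])
  obtain ⟨u, w, huw, hnadj⟩ := G.ne_top_iff_exists_not_adj.mp hnclique
  obtain ⟨v, huv⟩ := exists_adj u
  obtain ⟨t, hwt⟩ := exists_adj w
  refine (signedEdgeMatrix p G σ).le_rank_of_det_submatrix_ne_zero ![u, t] ![v, w] ?_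
  rw [Matrix.det_fin_two]
  simp [signedEdgeMatrix_apply_of_adj p G σ huv,
    signedEdgeMatrix_apply_of_adj p G σ hwt.symm, signedEdgeMatrix_apply_of_not_adj p G σ huw hnadj,
    hσ_ne_zero huv, hσ_ne_zero hwt.symm]

/-- for an odd prime `p` and a non-clique graph `G` of minimum degree
at least 2, every `±1` signing `σ` of the edges gives `rank(M_G^σ) ≥ 2` over `𝔽_p`. -/
theorem stmt15 (p : ℕ) [Fact p.Prime] (hodd : Odd p)
    (ℓ : ℕ) (G : SimpleGraph (Fin ℓ))
    (hdeg : ∀ v : Fin ℓ, 2 ≤ G.degree v) (hnclique : G ≠ ⊤)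
    (σ : Sym2 (Fin ℓ) → ZMod p)
    (hσ : ∀ e ∈ G.edgeFinset, σ e = 1 ∨ σ e = -1) :
    2 ≤ (signedEdgeMatrix p G σ).rank :=
  stmt15_general p ℓ G hdeg hnclique σ hσ
end
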